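/- Let a_1,...,a_n be unit vectors in R^3, p_1,...,p_n ≥ 0 with Σ_i p_i = 2 and Σ_i p_i a_i = 0, and suppose f(v_s) ≤ 1 for all s ∈ {±1}^3 with Σ_j α_j > 0. Define q_i(s) = p_i Θ(a_i · v_s) + (1 - f(v_s)) α_i / (Σ_j α_j). Then for each i, Σ_{s∈{±1}^3} q_i(s) G_s = (p_i/2)(I + (1/2) a_i·σ), where G_s = (1/16)(2I + v_s·σ). -/

import Mathlib

open RealInnerProductSpace Matrix

noncomputable def σx : Matrix (Fin 2) (Fin 2) ℂ := !![0, 1; 1, 0]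
noncomputable def σy : Matrix (Fin 2) (Fin 2) ℂ := !![0, -Complex.I; Complex.I, 0]
noncomputable def σz : Matrix (Fin 2) (Fin 2) ℂ := !![1, 0; 0, -1]

/-- The vertex `(s_x, s_y, s_z)` of the cube `[-1,1]^3`, signs encoded by booleans. -/
noncomputable def cubeVtx (s : Fin 3 → Bool) : EuclideanSpace ℝ (Fin 3) :=
  WithLp.toLp 2 (fun k => if s k then (1 : ℝ) else -1)

/-- `b·σ` for `b ∈ ℝ³`. -/
noncomputable def dotSigma (b : EuclideanSpace ℝ (Fin 3)) : Matrix (Fin 2) (Fin 2) ℂ :=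
  b 0 • σx + b 1 • σy + b 2 • σz

/-- The coarse-grained octant operator `G_{s_x s_y s_z} = (1/16)(2𝟙 + v_s·σ)`. -/
noncomputable def Goct (s : Fin 3 → Bool) : Matrix (Fin 2) (Fin 2) ℂ :=
  ((1 : ℝ) / 16) • ((2 : ℝ) • (1 : Matrix (Fin 2) (Fin 2) ℂ) + dotSigma (cubeVtx s))

/-!
The operator `∑ₛ q(s) G_s` only sees the moments `∑ₛ q(s)` and `∑ₛ q(s) v_s`. Pairing each cube
vertex with its antipode gives `∑ₛ Θ(b·v_s) v_s = ½ ∑ₛ (b·v_s) v_s = 4b`, so the ReLU part of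
`q_i` has first moment `4 p_i a_i`, while the defect `1 - f(v_s)` has first moment
`-4 ∑ⱼ pⱼ aⱼ = 0`. The definition of `α` is exactly what makes the defect's total mass `8 ∑ⱼ αⱼ`,
so that `∑ₛ q_i(s) = 4 p_i`.
-/

open Finset

lemma sum_fin_three_to_bool {M : Type*} [AddCommMonoid M] (F : (Fin 3 → Bool) → M) :
    ∑ s, F s = ∑ x : Bool, ∑ y : Bool, ∑ z : Bool, F ![x, y, z] := by
  rw [← (Fin.consEquiv fun _ => Bool).sum_comp, Fintype.sum_prod_type]
  refine Fintype.sum_congr _ _ fun x => ?_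
  rw [← (Fin.consEquiv fun _ => Bool).sum_comp, Fintype.sum_prod_type]
  refine Fintype.sum_congr _ _ fun y => ?_
  rw [← (Fin.consEquiv fun _ => Bool).sum_comp, Fintype.sum_prod_type]
  refine Fintype.sum_congr _ _ fun z => ?_
  rw [Fintype.sum_unique]
  rfl

lemma cubeVtx_not (s : Fin 3 → Bool) : cubeVtx (fun k => !s k) = -cubeVtx s := by
  ext k
  simp only [cubeVtx, PiLp.toLp_apply, PiLp.neg_apply]
  cases s k <;> norm_num

lemma sum_cubeVtx : ∑ s, cubeVtx s = 0 := by
  ext k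
  fin_cases k <;> norm_num [sum_fin_three_to_bool, cubeVtx]

lemma sum_inner_smul_cubeVtx (b : EuclideanSpace ℝ (Fin 3)) :
    ∑ s, ⟪b, cubeVtx s⟫ • cubeVtx s = (8 : ℝ) • b := by
  ext k
  simp only [sum_fin_three_to_bool, PiLp.inner_apply]
  fin_cases k <;> (simp [Fin.sum_univ_three, cubeVtx]; ring)

lemma sum_max_inner_smul_cubeVtx (b : EuclideanSpace ℝ (Fin 3)) :
    ∑ s, max ⟪b, cubeVtx s⟫ 0 • cubeVtx s = (4 : ℝ) • b := by
  have h_antipode : ∑ s, max ⟪b, cubeVtx s⟫ 0 • cubeVtx s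
      = -∑ s, max (-⟪b, cubeVtx s⟫) 0 • cubeVtx s := by
    rw [← sum_neg_distrib]
    refine Fintype.sum_bijective (fun s k => !s k) (Function.Involutive.bijective fun s => by simp)
      _ _ fun s => ?_
    simp only [cubeVtx_not, inner_neg_right, neg_neg, smul_neg]
  refine smul_right_injective _ (two_ne_zero (α := ℝ)) ?_
  calc (2 : ℝ) • ∑ s, max ⟪b, cubeVtx s⟫ 0 • cubeVtx s
      = ∑ s, max ⟪b, cubeVtx s⟫ 0 • cubeVtx s - ∑ s, max (-⟪b, cubeVtx s⟫) 0 • cubeVtx s := by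
        rw [two_smul, sub_eq_add_neg, ← h_antipode]
    _ = ∑ s, ⟪b, cubeVtx s⟫ • cubeVtx s := by
        simp_rw [← sum_sub_distrib, ← sub_smul, max_zero_sub_max_neg_zero_eq_self]
    _ = (2 : ℝ) • (4 : ℝ) • b := by
        rw [sum_inner_smul_cubeVtx]; module

noncomputable def dotSigmaₗ : EuclideanSpace ℝ (Fin 3) →ₗ[ℝ] Matrix (Fin 2) (Fin 2) ℂ where
  toFun := dotSigma
  map_add' b c := by simp only [dotSigma, PiLp.add_apply]; module
  map_smul' r b := by simp only [dotSigma, PiLp.smul_apply, smul_eq_mul, RingHom.id_apply]; module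

lemma dotSigma_sum {ι : Type*} (t : Finset ι) (b : ι → EuclideanSpace ℝ (Fin 3)) :
    dotSigma (∑ i ∈ t, b i) = ∑ i ∈ t, dotSigma (b i) :=
  map_sum dotSigmaₗ b t

lemma dotSigma_smul (r : ℝ) (b : EuclideanSpace ℝ (Fin 3)) :
    dotSigma (r • b) = r • dotSigma b :=
  dotSigmaₗ.map_smul r b

lemma sum_smul_Goct (q : (Fin 3 → Bool) → ℝ) :
    ∑ s, q s • Goct s
      = ((∑ s, q s) / 8) • (1 : Matrix (Fin 2) (Fin 2) ℂ)
        + ((1 : ℝ) / 16) • dotSigma (∑ s, q s • cubeVtx s) := by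
  simp only [Goct, dotSigma_sum, dotSigma_smul, smul_add, sum_add_distrib, sum_div, sum_smul,
    smul_sum, smul_smul]
  congr 1 <;> refine Fintype.sum_congr _ _ fun s => ?_ <;> module

section ReLUMixture

variable {n : ℕ} {a : Fin n → EuclideanSpace ℝ (Fin 3)} {p : Fin n → ℝ}
  {f : EuclideanSpace ℝ (Fin 3) → ℝ}

lemma sum_apply_cubeVtx_of_relu (hf : ∀ x, f x = ∑ i, p i * max ⟪x, a i⟫ 0) :
    ∑ s, f (cubeVtx s) = ∑ i, p i * ∑ s, max ⟪a i, cubeVtx s⟫ 0 := by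
  simp_rw [hf, mul_sum, real_inner_comm _ (cubeVtx _)]
  exact sum_comm

lemma sum_apply_smul_cubeVtx_of_relu (hf : ∀ x, f x = ∑ i, p i * max ⟪x, a i⟫ 0) :
    ∑ s, f (cubeVtx s) • cubeVtx s = (4 : ℝ) • ∑ i, p i • a i := by
  simp_rw [hf, sum_smul, real_inner_comm _ (cubeVtx _), mul_smul, smul_sum]
  rw [sum_comm]
  simp_rw [← smul_sum, sum_max_inner_smul_cubeVtx, smul_comm (p _) (4 : ℝ)]
  rw [smul_sum]

end ReLUMixture

theorem parent_povm_simulates_general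
    (n : ℕ) (a : Fin n → EuclideanSpace ℝ (Fin 3)) (p : Fin n → ℝ)
    (hp2 : ∑ i, p i = 2) (hsum : ∑ i, p i • a i = 0)
    (f : EuclideanSpace ℝ (Fin 3) → ℝ)
    (hf : ∀ x, f x = ∑ i, p i * max ⟪x, a i⟫ 0)
    (α : Fin n → ℝ)
    (hα : ∀ i, α i = (p i / 2) * (1 - (1 / 4) * ∑ s : Fin 3 → Bool, max ⟪a i, cubeVtx s⟫ 0))
    (hαpos : 0 < ∑ j, α j) :
    ∀ i, ∑ s : Fin 3 → Bool,
        (p i * max ⟪a i, cubeVtx s⟫ 0 + (1 - f (cubeVtx s)) * α i / (∑ j, α j)) • Goct s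
      = (p i / 2) • ((1 : Matrix (Fin 2) (Fin 2) ℂ) + ((1 : ℝ) / 2) • dotSigma (a i)) := by
  intro i
  set A := ∑ j, α j with hA
  have hpT (j : Fin n) : p j * ∑ s, max ⟪a j, cubeVtx s⟫ 0 = 4 * p j - 8 * α j := by
    linear_combination 8 * hα j
  have hdefect_sum : ∑ s, (1 - f (cubeVtx s)) = 8 * A := by
    rw [sum_sub_distrib, sum_apply_cubeVtx_of_relu hf]
    norm_num [hpT, ← mul_sum, hp2, ← hA]
  have hdefect_smul : ∑ s, (1 - f (cubeVtx s)) • cubeVtx s = 0 := by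
    simp_rw [sub_smul, one_smul]
    rw [sum_sub_distrib, sum_cubeVtx, sum_apply_smul_cubeVtx_of_relu hf, hsum]
    simp
  have hq_sum : ∑ s, (p i * max ⟪a i, cubeVtx s⟫ 0 + (1 - f (cubeVtx s)) * α i / A) = 4 * p i := by
    rw [sum_add_distrib, ← mul_sum, ← sum_div, ← sum_mul, hdefect_sum, hpT]
    field_simp [hαpos.ne']
    ring
  have hq_smul : ∑ s, (p i * max ⟪a i, cubeVtx s⟫ 0 + (1 - f (cubeVtx s)) * α i / A) • cubeVtx s
      = (4 * p i) • a i := by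
    simp_rw [add_smul, sum_add_distrib, mul_div_assoc, mul_smul, ← smul_sum, smul_comm (_ - _),
      ← smul_sum, sum_max_inner_smul_cubeVtx, hdefect_smul, smul_zero, add_zero, smul_smul, mul_comm]
  rw [sum_smul_Goct, hq_sum, hq_smul, dotSigma_smul]
  module

theorem parent_povm_simulates
    (n : ℕ) (a : Fin n → EuclideanSpace ℝ (Fin 3)) (p : Fin n → ℝ)
    (ha : ∀ i, ‖a i‖ = 1) (hp : ∀ i, 0 ≤ p i)
    (hp2 : ∑ i, p i = 2) (hsum : ∑ i, p i • a i = 0)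
    (f : EuclideanSpace ℝ (Fin 3) → ℝ)
    (hf : ∀ x, f x = ∑ i, p i * max ⟪x, a i⟫ 0)
    (α : Fin n → ℝ)
    (hα : ∀ i, α i = (p i / 2) * (1 - (1 / 4) * ∑ s : Fin 3 → Bool, max ⟪a i, cubeVtx s⟫ 0))
    (hframe : ∀ s : Fin 3 → Bool, f (cubeVtx s) ≤ 1)
    (hαpos : 0 < ∑ j, α j) :
    ∀ i, ∑ s : Fin 3 → Bool,
        (p i * max ⟪a i, cubeVtx s⟫ 0 + (1 - f (cubeVtx s)) * α i / (∑ j, α j)) • Goct s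
      = (p i / 2) • ((1 : Matrix (Fin 2) (Fin 2) ℂ) + ((1 : ℝ) / 2) • dotSigma (a i)) :=
  parent_povm_simulates_general n a p hp2 hsum f hf α hα hαpos
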